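/- arXiv:2605.10335 — 3 statements merged into one kernel-verified Lean document; each statement's English description precedes it below -/
import Mathlib

section
/- For every dimension d ≥ 1, every β ∈ (0, 1], and all vectors x, y ∈ ℝ^d, the signed power transform is Hölder continuous of order β in the ℓ_{1+β} norm: ‖Φ_β(x) − Φ_β(y)‖_{1+β} ≤ C_β · ‖x − y‖_{1+β}^β, where C_β = 2^{1−β} · d^{(1−β)/(1+β)}. Moreover C_β ≤ 2d. -/
open Finset

lemma real_rpow_add_le {β : ℝ} (hβ0 : 0 ≤ β) (hβ1 : β ≤ 1) {a b : ℝ} (ha : 0 ≤ a) (hb : 0 ≤ b) :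
    (a + b) ^ β ≤ a ^ β + b ^ β := by
  have h := NNReal.coe_le_coe.2 (NNReal.rpow_add_le_add_rpow (a.toNNReal) (b.toNNReal) hβ0 hβ1)
  simpa [NNReal.coe_rpow, Real.coe_toNNReal _ ha, Real.coe_toNNReal _ hb,
    Real.coe_toNNReal _ (add_nonneg ha hb)] using h

lemma sum_rpow_le_card_rpow_mul {ι : Type*} (s : Finset ι) {β : ℝ} (hβ0 : 0 < β) (hβ1 : β ≤ 1)
    (a : ι → ℝ) (ha : ∀ i ∈ s, 0 ≤ a i) :
    ∑ i ∈ s, a i ^ β ≤ (s.card : ℝ) ^ (1 - β) * (∑ i ∈ s, a i) ^ β := by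
  rcases s.eq_empty_or_nonempty with rfl | hs
  · simp [Real.zero_rpow hβ0.ne']
  have hn : (0:ℝ) < s.card := by exact_mod_cast Finset.card_pos.mpr hs
  have hw : ∑ _i ∈ s, (1 / (s.card : ℝ)) = 1 := by
    rw [Finset.sum_const, nsmul_eq_mul]; field_simp
  have hp : (1:ℝ) ≤ 1/β := by
    rw [le_one_div (by norm_num) hβ0]; simpa using hβ1
  have h := Real.arith_mean_le_rpow_mean (p := 1/β) s (fun _ => 1 / (s.card : ℝ))
    (fun i => a i ^ β) (fun i _ => by positivity) hw
    (fun i hi => Real.rpow_nonneg (ha i hi) β) hp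
  have hz : ∀ i ∈ s, (1 / (s.card : ℝ)) * ((a i ^ β) ^ ((1:ℝ)/β)) = (1 / (s.card:ℝ)) * a i := by
    intro i hi
    rw [← Real.rpow_mul (ha i hi), mul_one_div, div_self hβ0.ne', Real.rpow_one]
  rw [Finset.sum_congr rfl hz, one_div_one_div] at h
  rw [← Finset.mul_sum, ← Finset.mul_sum] at h
  have hsum : 0 ≤ ∑ i ∈ s, a i := Finset.sum_nonneg ha
  rw [Real.mul_rpow (by positivity) hsum] at h
  calc ∑ i ∈ s, a i ^ β = (s.card : ℝ) * ((1 / (s.card:ℝ)) * ∑ i ∈ s, a i ^ β) := by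
        field_simp
  _ ≤ (s.card : ℝ) * ((1 / (s.card:ℝ)) ^ β * (∑ i ∈ s, a i) ^ β) :=
        mul_le_mul_of_nonneg_left h hn.le
  _ = (s.card : ℝ) ^ (1 - β) * (∑ i ∈ s, a i) ^ β := by
        rw [Real.div_rpow zero_le_one hn.le, Real.one_rpow, Real.rpow_sub hn, Real.rpow_one]
        ring

lemma two_concave {β : ℝ} (hβ0 : 0 < β) (hβ1 : β ≤ 1) {a b : ℝ} (ha : 0 ≤ a) (hb : 0 ≤ b) :
    a ^ β + b ^ β ≤ 2 ^ (1 - β) * (a + b) ^ β := by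
  have h := sum_rpow_le_card_rpow_mul (Finset.univ : Finset (Fin 2)) hβ0 hβ1 ![a, b]
    (by intro i _; fin_cases i <;> simpa)
  simpa [Fin.sum_univ_two] using h

lemma sign_mul_abs_rpow {β : ℝ} (hβ0 : 0 < β) {a : ℝ} (ha : 0 ≤ a) :
    Real.sign a * |a| ^ β = a ^ β := by
  rcases ha.eq_or_lt with rfl | h
  · simp [Real.zero_rpow hβ0.ne']
  · rw [Real.sign_of_pos h, abs_of_pos h, one_mul]

lemma sign_mul_abs_rpow_neg {β : ℝ} (hβ0 : 0 < β) {a : ℝ} (ha : a ≤ 0) :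
    Real.sign a * |a| ^ β = -((-a) ^ β) := by
  rcases ha.eq_or_lt with rfl | h
  · simp [Real.zero_rpow hβ0.ne']
  · rw [Real.sign_of_neg h, abs_of_neg h]; ring

lemma key_nonneg {β : ℝ} (hβ0 : 0 < β) (hβ1 : β ≤ 1) {a b : ℝ} (ha : 0 ≤ a) (hb : 0 ≤ b) :
    |a ^ β - b ^ β| ≤ |a - b| ^ β := by
  wlog hab : b ≤ a with H
  · have := H hβ0 hβ1 hb ha (le_of_not_ge hab)
    rwa [abs_sub_comm, abs_sub_comm b a] at this
  rw [abs_of_nonneg (sub_nonneg.2 (Real.rpow_le_rpow hb hab hβ0.le)),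
    abs_of_nonneg (sub_nonneg.2 hab)]
  have h2 : a ^ β ≤ b ^ β + (a - b) ^ β := by
    calc a ^ β = (b + (a - b)) ^ β := by ring_nf
    _ ≤ _ := real_rpow_add_le hβ0.le hβ1 hb (sub_nonneg.2 hab)
  linarith

lemma one_le_two_rpow {β : ℝ} (hβ1 : β ≤ 1) : (1:ℝ) ≤ 2 ^ (1 - β) := by
  have := Real.rpow_le_rpow_of_exponent_le (one_le_two (α := ℝ)) (by linarith : (0:ℝ) ≤ 1 - β)
  simpa using this

lemma key_mixed {β : ℝ} (hβ0 : 0 < β) (hβ1 : β ≤ 1) {a b : ℝ} (ha : 0 ≤ a) (hb : b ≤ 0) :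
    |Real.sign a * |a| ^ β - Real.sign b * |b| ^ β| ≤ 2 ^ (1 - β) * |a - b| ^ β := by
  rw [sign_mul_abs_rpow hβ0 ha, sign_mul_abs_rpow_neg hβ0 hb, sub_neg_eq_add]
  have hb' : 0 ≤ -b := by linarith
  rw [abs_of_nonneg (add_nonneg (Real.rpow_nonneg ha β) (Real.rpow_nonneg hb' β)),
    abs_of_nonneg (by linarith : (0:ℝ) ≤ a - b)]
  have := two_concave hβ0 hβ1 ha hb'
  calc a ^ β + (-b) ^ β ≤ 2 ^ (1 - β) * (a + -b) ^ β := this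
  _ = 2 ^ (1 - β) * (a - b) ^ β := by ring_nf

lemma key_nn {β : ℝ} (hβ0 : 0 < β) (hβ1 : β ≤ 1) {a b : ℝ} (ha : 0 ≤ a) (hb : 0 ≤ b) :
    |Real.sign a * |a| ^ β - Real.sign b * |b| ^ β| ≤ 2 ^ (1 - β) * |a - b| ^ β := by
  rw [sign_mul_abs_rpow hβ0 ha, sign_mul_abs_rpow hβ0 hb]
  calc |a ^ β - b ^ β| ≤ |a - b| ^ β := key_nonneg hβ0 hβ1 ha hb
  _ ≤ 2 ^ (1 - β) * |a - b| ^ β := by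
      nlinarith [one_le_two_rpow hβ1, Real.rpow_nonneg (abs_nonneg (a - b)) β]

lemma key_pointwise {β : ℝ} (hβ0 : 0 < β) (hβ1 : β ≤ 1) (a b : ℝ) :
    |Real.sign a * |a| ^ β - Real.sign b * |b| ^ β| ≤ 2 ^ (1 - β) * |a - b| ^ β := by
  rcases le_total 0 a with ha | ha <;> rcases le_total 0 b with hb | hb
  · exact key_nn hβ0 hβ1 ha hb
  · exact key_mixed hβ0 hβ1 ha hb
  · have := key_mixed hβ0 hβ1 hb ha
    rwa [abs_sub_comm, abs_sub_comm b a] at this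
  · -- both nonpos
    have := key_nn hβ0 hβ1 (by linarith : (0:ℝ) ≤ -a) (by linarith : (0:ℝ) ≤ -b)
    rw [Real.sign_neg, Real.sign_neg, abs_neg, abs_neg] at this
    have heq : |(-Real.sign a) * |a| ^ β - (-Real.sign b) * |b| ^ β|
        = |Real.sign a * |a| ^ β - Real.sign b * |b| ^ β| := by
      rw [← abs_neg]; ring_nf
    rw [heq] at this
    calc |Real.sign a * |a| ^ β - Real.sign b * |b| ^ β|
        ≤ 2 ^ (1 - β) * |-a - -b| ^ β := this
    _ = 2 ^ (1 - β) * |a - b| ^ β := by rw [← abs_neg (a - b)]; ring_nf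

/-- **Hölder continuity of the signed power transform.**
For every dimension `d ≥ 1`, every `β ∈ (0,1]` and all `x, y : ℝ^d`,
`‖Φ_β(x) − Φ_β(y)‖_{1+β} ≤ C_β · ‖x − y‖_{1+β}^β` with
`C_β = 2^(1−β) · d^((1−β)/(1+β))`, and moreover `C_β ≤ 2d`.
Here `Φ_β(x)_i = sign(x_i)·|x_i|^β` and `‖x‖_p = (Σ_i |x_i|^p)^(1/p)`. -/
theorem powerstep_holder_continuity (d : ℕ) (hd : 1 ≤ d) (β : ℝ) (hβ0 : 0 < β) (hβ1 : β ≤ 1)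
    (x y : Fin d → ℝ) :
    (∑ i, |Real.sign (x i) * |x i| ^ β - Real.sign (y i) * |y i| ^ β| ^ (1 + β))
        ^ ((1 : ℝ) / (1 + β))
      ≤ (2 : ℝ) ^ (1 - β) * (d : ℝ) ^ ((1 - β) / (1 + β)) *
        ((∑ i, |x i - y i| ^ (1 + β)) ^ ((1 : ℝ) / (1 + β))) ^ β ∧
    (2 : ℝ) ^ (1 - β) * (d : ℝ) ^ ((1 - β) / (1 + β)) ≤ 2 * d := by
  have hp : (0:ℝ) < 1 + β := by linarith
  have hd1 : (1:ℝ) ≤ d := by exact_mod_cast hd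
  set K : ℝ := 2 ^ (1 - β) with hKdef
  have hK0 : (0:ℝ) ≤ K := Real.rpow_nonneg (by norm_num) _
  constructor
  · set S : ℝ := ∑ i, |x i - y i| ^ (1 + β) with hSdef
    have hS : 0 ≤ S := Finset.sum_nonneg fun i _ => Real.rpow_nonneg (abs_nonneg _) _
    have step1 : ∀ i, |Real.sign (x i) * |x i| ^ β - Real.sign (y i) * |y i| ^ β| ^ (1 + β)
        ≤ K ^ (1 + β) * (|x i - y i| ^ (1 + β)) ^ β := by
      intro i
      have h := key_pointwise hβ0 hβ1 (x i) (y i)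
      have h2 := Real.rpow_le_rpow (abs_nonneg _) h hp.le
      rw [Real.mul_rpow hK0 (Real.rpow_nonneg (abs_nonneg _) _)] at h2
      rwa [show (|x i - y i| ^ β) ^ (1 + β) = (|x i - y i| ^ (1 + β)) ^ β by
        rw [← Real.rpow_mul (abs_nonneg _), ← Real.rpow_mul (abs_nonneg _), mul_comm]] at h2
    have hcard : ((Finset.univ : Finset (Fin d)).card : ℝ) = (d : ℝ) := by
      simp
    have h2 := sum_rpow_le_card_rpow_mul (Finset.univ : Finset (Fin d)) hβ0 hβ1
      (fun i => |x i - y i| ^ (1 + β)) (fun i _ => Real.rpow_nonneg (abs_nonneg _) _)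
    rw [hcard] at h2
    have hA : ∑ i, |Real.sign (x i) * |x i| ^ β - Real.sign (y i) * |y i| ^ β| ^ (1 + β)
        ≤ K ^ (1 + β) * ((d:ℝ) ^ (1 - β) * S ^ β) := by
      calc ∑ i, |Real.sign (x i) * |x i| ^ β - Real.sign (y i) * |y i| ^ β| ^ (1 + β)
          ≤ ∑ i, K ^ (1 + β) * (|x i - y i| ^ (1 + β)) ^ β :=
            Finset.sum_le_sum fun i _ => step1 i
      _ = K ^ (1 + β) * ∑ i, (|x i - y i| ^ (1 + β)) ^ β := by rw [← Finset.mul_sum]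
      _ ≤ K ^ (1 + β) * ((d:ℝ) ^ (1 - β) * S ^ β) :=
            mul_le_mul_of_nonneg_left h2 (Real.rpow_nonneg hK0 _)
    have hB := Real.rpow_le_rpow (Finset.sum_nonneg fun i _ =>
      Real.rpow_nonneg (abs_nonneg _) _) hA (by positivity : (0:ℝ) ≤ 1/(1+β))
    refine hB.trans_eq ?_
    rw [Real.mul_rpow (Real.rpow_nonneg hK0 _)
        (mul_nonneg (Real.rpow_nonneg (by positivity) _) (Real.rpow_nonneg hS _)),
      Real.mul_rpow (Real.rpow_nonneg (by positivity) _) (Real.rpow_nonneg hS _),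
      ← Real.rpow_mul hK0, ← Real.rpow_mul (by positivity : (0:ℝ) ≤ (d:ℝ)),
      ← Real.rpow_mul hS, ← Real.rpow_mul hS,
      mul_one_div, mul_one_div, mul_one_div, div_self hp.ne', Real.rpow_one,
      one_div_mul_eq_div, mul_assoc]
  · have hK : K ≤ 2 := by
      have := Real.rpow_le_rpow_of_exponent_le (one_le_two (α := ℝ))
        (by linarith : 1 - β ≤ 1)
      simpa using this
    have hD : (d:ℝ) ^ ((1 - β) / (1 + β)) ≤ (d:ℝ) := by
      have := Real.rpow_le_rpow_of_exponent_le hd1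
        (show (1 - β) / (1 + β) ≤ 1 by rw [div_le_one hp]; linarith)
      simpa using this
    exact mul_le_mul hK hD (Real.rpow_nonneg (by positivity) _) (by norm_num)
end

section
/- Under the stated stochastic setup, the transformed PowerStep update satisfies the uniform bound E[‖Φ_β(m_t)‖_2²] ≤ d^{1−β} · 2^β · ((G² + σ²)/(1−γ)²)^β for every t ≥ 1. -/
/-!
Coordinatewise, `|Φ_β(x)_i|² = (x_i²)^β`, so concavity of `s ↦ s^β` (Jensen over the `d`
coordinates) gives `‖Φ_β(x)‖² ≤ d^{1-β} (‖x‖²)^β`, and Jensen for the expectation reduces the claim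
to the second-moment bound `E‖m_t‖² ≤ 2(G² + σ²)/(1-γ)²`. That bound follows from
`E‖g_t‖² ≤ 2E‖g_t - ∇f(θ_{t-1})‖² + 2G² ≤ 2(σ² + G²)` and the convexity estimate
`‖γa + b‖² ≤ γ‖a‖² + ‖b‖²/(1-γ)`, which makes `E‖m_t‖²` stay below the fixed point of
`s ↦ γs + 2(G² + σ²)/(1-γ)`.
-/

open MeasureTheory

/-- The signed power transform `Φ_β(x)_i = sign(x_i)·|x_i|^β` on `ℝ^d` (with `sign 0 = 0`). -/
noncomputable def signedPowerTransform (d : ℕ) (β : ℝ) (x : EuclideanSpace ℝ (Fin d)) :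
    EuclideanSpace ℝ (Fin d) :=
  WithLp.toLp 2 (fun i => Real.sign (x i) * |x i| ^ β)

open Finset in
theorem sum_rpow_le_card_rpow_mul_rpow_sum_of_nonneg {ι : Type*} (s : Finset ι) {f : ι → ℝ}
    (hf : ∀ i ∈ s, 0 ≤ f i) {p : ℝ} (hp₀ : 0 ≤ p) (hp₁ : p ≤ 1) :
    ∑ i ∈ s, f i ^ p ≤ (#s : ℝ) ^ (1 - p) * (∑ i ∈ s, f i) ^ p := by
  rcases s.eq_empty_or_nonempty with rfl | hs
  · rw [sum_empty, sum_empty]; positivity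
  have hn : (0 : ℝ) < #s := by exact_mod_cast hs.card_pos
  have jensen := (Real.concaveOn_rpow hp₀ hp₁).le_map_sum (t := s) (w := fun _ => (#s : ℝ)⁻¹)
    (fun _ _ => by positivity) (by simp [hn.ne']) hf
  simp only [smul_eq_mul, ← mul_sum] at jensen
  rw [Real.mul_rpow (by positivity) (sum_nonneg hf), Real.inv_rpow hn.le] at jensen
  calc ∑ i ∈ s, f i ^ p = #s * ((#s : ℝ)⁻¹ * ∑ i ∈ s, f i ^ p) := by field_simp
    _ ≤ #s * (((#s : ℝ) ^ p)⁻¹ * (∑ i ∈ s, f i) ^ p) := by gcongr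
    _ = (#s : ℝ) ^ (1 - p) * (∑ i ∈ s, f i) ^ p := by
      rw [Real.rpow_sub hn, Real.rpow_one]; ring

theorem sign_mul_abs_rpow_sq_le (x p : ℝ) : (Real.sign x * |x| ^ p) ^ 2 ≤ (x ^ 2) ^ p := by
  have hsign : Real.sign x ^ 2 ≤ 1 := by
    rcases Real.sign_apply_eq x with h | h | h <;> rw [h] <;> norm_num
  have habs : (|x| ^ p) ^ 2 = (x ^ 2) ^ p := by
    rw [← sq_abs x, ← Real.rpow_natCast, ← Real.rpow_natCast, ← Real.rpow_mul (abs_nonneg x),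
      ← Real.rpow_mul (abs_nonneg x), mul_comm]
  calc (Real.sign x * |x| ^ p) ^ 2 = Real.sign x ^ 2 * (|x| ^ p) ^ 2 := by ring
    _ ≤ 1 * (|x| ^ p) ^ 2 := by gcongr
    _ = (x ^ 2) ^ p := by rw [one_mul, habs]

theorem norm_signedPowerTransform_sq_le (d : ℕ) {β : ℝ} (hβ₀ : 0 ≤ β) (hβ₁ : β ≤ 1)
    (x : EuclideanSpace ℝ (Fin d)) :
    ‖signedPowerTransform d β x‖ ^ 2 ≤ (d : ℝ) ^ (1 - β) * (‖x‖ ^ 2) ^ β := by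
  simp only [EuclideanSpace.real_norm_sq_eq, signedPowerTransform]
  calc ∑ i, (Real.sign (x i) * |x i| ^ β) ^ 2 ≤ ∑ i, (x i ^ 2) ^ β :=
        Finset.sum_le_sum fun i _ => sign_mul_abs_rpow_sq_le (x i) β
    _ ≤ (d : ℝ) ^ (1 - β) * (∑ i, x i ^ 2) ^ β := by
      simpa using sum_rpow_le_card_rpow_mul_rpow_sum_of_nonneg Finset.univ
        (fun i _ => sq_nonneg (x i)) hβ₀ hβ₁

theorem norm_sq_le_of_norm_le {E : Type*} [SeminormedAddCommGroup E] {x y : E} {G : ℝ}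
    (hy : ‖y‖ ≤ G) : ‖x‖ ^ 2 ≤ 2 * ‖x - y‖ ^ 2 + 2 * G ^ 2 := by
  have htri : ‖x‖ ≤ ‖x - y‖ + G := (norm_le_norm_sub_add x y).trans (by linarith)
  nlinarith [norm_nonneg x, sq_nonneg (‖x - y‖ - G)]

theorem norm_smul_add_sq_le {E : Type*} [SeminormedAddCommGroup E] [NormedSpace ℝ E] {γ : ℝ}
    (hγ₀ : 0 ≤ γ) (hγ₁ : γ < 1) (x y : E) :
    ‖γ • x + y‖ ^ 2 ≤ γ * ‖x‖ ^ 2 + ‖y‖ ^ 2 / (1 - γ) := by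
  have h1γ : 0 < 1 - γ := by linarith
  have htri : ‖γ • x + y‖ ≤ γ * ‖x‖ + ‖y‖ := by
    simpa [norm_smul, abs_of_nonneg hγ₀] using norm_add_le (γ • x) y
  have hslack : (γ * ‖x‖ + ‖y‖) ^ 2 + γ / (1 - γ) * ((1 - γ) * ‖x‖ - ‖y‖) ^ 2
      = γ * ‖x‖ ^ 2 + ‖y‖ ^ 2 / (1 - γ) := by
    field_simp; ring
  have : 0 ≤ γ / (1 - γ) * ((1 - γ) * ‖x‖ - ‖y‖) ^ 2 := by positivity
  nlinarith [norm_nonneg (γ • x + y), mul_nonneg hγ₀ (norm_nonneg x), norm_nonneg y]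

section Probability

variable {Ω : Type*} {m0 : MeasurableSpace Ω} {μ : Measure Ω}

theorem MeasureTheory.Integrable.rpow_of_nonneg_of_le_one [IsFiniteMeasure μ] {h : Ω → ℝ}
    (hint : Integrable h μ) (hnn : ∀ ω, 0 ≤ h ω) {p : ℝ} (hp₀ : 0 ≤ p) (hp₁ : p ≤ 1) :
    Integrable (fun ω => h ω ^ p) μ := by
  refine ((integrable_const 1).add hint).mono'
    ((Real.continuous_rpow_const hp₀).comp_aestronglyMeasurable hint.1) (ae_of_all _ fun ω => ?_)
  rw [Real.norm_of_nonneg (Real.rpow_nonneg (hnn ω) p), Pi.add_apply]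
  rcases le_total (h ω) 1 with hle | hle
  · linarith [Real.rpow_le_one (hnn ω) hle hp₀, hnn ω]
  · have hmono : h ω ^ p ≤ h ω ^ (1 : ℝ) := Real.rpow_le_rpow_of_exponent_le hle hp₁
    rw [Real.rpow_one] at hmono
    linarith

theorem integral_rpow_le_rpow_integral [IsProbabilityMeasure μ] {h : Ω → ℝ}
    (hint : Integrable h μ) (hnn : ∀ ω, 0 ≤ h ω) {p : ℝ} (hp₀ : 0 ≤ p) (hp₁ : p ≤ 1) :
    ∫ ω, h ω ^ p ∂μ ≤ (∫ ω, h ω ∂μ) ^ p :=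
  (Real.concaveOn_rpow hp₀ hp₁).le_map_integral (Real.continuous_rpow_const hp₀).continuousOn
    isClosed_Ici (ae_of_all _ hnn) hint (hint.rpow_of_nonneg_of_le_one hnn hp₀ hp₁)

theorem integral_le_of_ae_condExp_le [IsProbabilityMeasure μ] {m : MeasurableSpace Ω}
    (hm : m ≤ m0) {h : Ω → ℝ} {c : ℝ} (hc : ∀ᵐ ω ∂μ, μ[h | m] ω ≤ c) :
    ∫ ω, h ω ∂μ ≤ c := by
  rw [← integral_condExp hm]
  exact (integral_mono_ae integrable_condExp (integrable_const c) hc).trans_eq (by simp)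

variable {E : Type*} [NormedAddCommGroup E]

theorem memLp_two_of_integrable_norm_sub_sq [IsFiniteMeasure μ] {X Y : Ω → E} {G : ℝ}
    (hX : AEStronglyMeasurable X μ) (hY : ∀ ω, ‖Y ω‖ ≤ G)
    (hXY : Integrable (fun ω => ‖X ω - Y ω‖ ^ 2) μ) : MemLp X 2 μ := by
  refine (memLp_two_iff_integrable_sq_norm hX).2 <|
    ((hXY.const_mul 2).add (integrable_const (2 * G ^ 2))).mono' (hX.norm.pow 2)
      (ae_of_all _ fun ω => ?_)
  rw [Real.norm_of_nonneg (sq_nonneg _)]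
  exact norm_sq_le_of_norm_le (hY ω)

theorem integral_norm_sq_le_of_norm_le [IsProbabilityMeasure μ] {X Y : Ω → E} {G : ℝ}
    (hX : AEStronglyMeasurable X μ) (hY : ∀ ω, ‖Y ω‖ ≤ G)
    (hXY : Integrable (fun ω => ‖X ω - Y ω‖ ^ 2) μ) :
    ∫ ω, ‖X ω‖ ^ 2 ∂μ ≤ 2 * ∫ ω, ‖X ω - Y ω‖ ^ 2 ∂μ + 2 * G ^ 2 := by
  have hX2 := (memLp_two_of_integrable_norm_sub_sq hX hY hXY).integrable_norm_pow two_ne_zero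
  calc ∫ ω, ‖X ω‖ ^ 2 ∂μ ≤ ∫ ω, (2 * ‖X ω - Y ω‖ ^ 2 + 2 * G ^ 2) ∂μ := by
        exact integral_mono hX2 ((hXY.const_mul 2).add (integrable_const _))
          fun ω => norm_sq_le_of_norm_le (hY ω)
    _ = 2 * ∫ ω, ‖X ω - Y ω‖ ^ 2 ∂μ + 2 * G ^ 2 := by
      rw [integral_add (hXY.const_mul 2) (integrable_const _), integral_const_mul]
      simp

section Momentum

variable [NormedSpace ℝ E] {γ : ℝ} {m g : ℕ → Ω → E}

theorem memLp_two_momentum (hm0 : ∀ ω, m 0 ω = 0)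
    (hmrec : ∀ t ω, m (t + 1) ω = γ • m t ω + g (t + 1) ω)
    (hg : ∀ t, MemLp (g (t + 1)) 2 μ) (t : ℕ) : MemLp (m t) 2 μ := by
  induction t with
  | zero => rw [funext hm0]; exact MemLp.zero
  | succ t ih => rw [funext (hmrec t)]; exact (ih.const_smul γ).add (hg t)

theorem integral_norm_sq_momentum_le (hγ₀ : 0 ≤ γ) (hγ₁ : γ < 1) (hm0 : ∀ ω, m 0 ω = 0)
    (hmrec : ∀ t ω, m (t + 1) ω = γ • m t ω + g (t + 1) ω)
    (hg : ∀ t, MemLp (g (t + 1)) 2 μ) {B : ℝ} (hgB : ∀ t, ∫ ω, ‖g (t + 1) ω‖ ^ 2 ∂μ ≤ B)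
    (t : ℕ) : ∫ ω, ‖m t ω‖ ^ 2 ∂μ ≤ B / (1 - γ) ^ 2 := by
  have h1γ : 0 < 1 - γ := by linarith
  have hB : 0 ≤ B := (integral_nonneg fun ω => sq_nonneg _).trans (hgB 0)
  induction t with
  | zero =>
    simp only [hm0, norm_zero, zero_pow two_ne_zero, integral_zero]
    positivity
  | succ t ih =>
    have hmt := (memLp_two_momentum hm0 hmrec hg t).integrable_norm_pow two_ne_zero
    have hgt := (hg t).integrable_norm_pow two_ne_zero
    calc ∫ ω, ‖m (t + 1) ω‖ ^ 2 ∂μ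
        ≤ ∫ ω, (γ * ‖m t ω‖ ^ 2 + ‖g (t + 1) ω‖ ^ 2 / (1 - γ)) ∂μ := by
          refine integral_mono
            ((memLp_two_momentum hm0 hmrec hg (t + 1)).integrable_norm_pow two_ne_zero)
            ((hmt.const_mul γ).add (hgt.div_const _)) fun ω => ?_
          simpa only [hmrec t ω] using norm_smul_add_sq_le hγ₀ hγ₁ (m t ω) (g (t + 1) ω)
      _ = γ * ∫ ω, ‖m t ω‖ ^ 2 ∂μ + (∫ ω, ‖g (t + 1) ω‖ ^ 2 ∂μ) / (1 - γ) := by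
          rw [integral_add (hmt.const_mul γ) (hgt.div_const _), integral_const_mul, integral_div]
      _ ≤ γ * (B / (1 - γ) ^ 2) + B / (1 - γ) := by gcongr; exact hgB t
      _ = B / (1 - γ) ^ 2 := by field_simp; ring

end Momentum

end Probability

theorem powerstep_transformed_update_bound_general
    {Ω : Type*} {m0 : MeasurableSpace Ω} (μ : Measure Ω) [IsProbabilityMeasure μ]
    (ℱ : Filtration ℕ m0) (d : ℕ)
    (f : EuclideanSpace ℝ (Fin d) → ℝ)
    (G : ℝ) (hgrad : ∀ x, ‖gradient f x‖ ≤ G)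
    (γ : ℝ) (hγ0 : 0 ≤ γ) (hγ1 : γ < 1) (β : ℝ) (hβ0 : 0 < β) (hβ1 : β ≤ 1)
    (σ : ℝ)
    (θ m g : ℕ → Ω → EuclideanSpace ℝ (Fin d))
    (hm0 : ∀ ω, m 0 ω = 0)
    (hmrec : ∀ t : ℕ, ∀ ω, m (t + 1) ω = γ • m t ω + g (t + 1) ω)
    (hgmeas : ∀ t : ℕ, StronglyMeasurable[ℱ (t + 1)] (g (t + 1)))
    (hg2int : ∀ t : ℕ, Integrable (fun ω => ‖g (t + 1) ω - gradient f (θ t ω)‖ ^ 2) μ)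
    (hvar : ∀ t : ℕ, ∀ᵐ ω ∂μ,
      (μ[fun ω' => ‖g (t + 1) ω' - gradient f (θ t ω')‖ ^ 2 | ℱ t]) ω ≤ σ ^ 2) :
    ∀ t : ℕ, 1 ≤ t → ∫ ω, ‖signedPowerTransform d β (m t ω)‖ ^ 2 ∂μ
      ≤ (d : ℝ) ^ (1 - β) * 2 ^ β * ((G ^ 2 + σ ^ 2) / (1 - γ) ^ 2) ^ β := by
  intro t _
  have hgaesm : ∀ t, AEStronglyMeasurable (g (t + 1)) μ := fun t =>
    ((hgmeas t).mono (ℱ.le _)).aestronglyMeasurable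
  have hgL2 : ∀ t, MemLp (g (t + 1)) 2 μ := fun t =>
    memLp_two_of_integrable_norm_sub_sq (hgaesm t) (fun ω => hgrad (θ t ω)) (hg2int t)
  have hgB : ∀ t, ∫ ω, ‖g (t + 1) ω‖ ^ 2 ∂μ ≤ 2 * (G ^ 2 + σ ^ 2) := fun t => by
    linarith [integral_norm_sq_le_of_norm_le (hgaesm t) (fun ω => hgrad (θ t ω)) (hg2int t),
      integral_le_of_ae_condExp_le (ℱ.le t) (hvar t)]
  have hm2 : Integrable (fun ω => ‖m t ω‖ ^ 2) μ :=
    (memLp_two_momentum hm0 hmrec hgL2 t).integrable_norm_pow two_ne_zero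
  calc ∫ ω, ‖signedPowerTransform d β (m t ω)‖ ^ 2 ∂μ
      ≤ ∫ ω, (d : ℝ) ^ (1 - β) * (‖m t ω‖ ^ 2) ^ β ∂μ :=
        integral_mono_of_nonneg (ae_of_all _ fun ω => by positivity)
          ((hm2.rpow_of_nonneg_of_le_one (fun ω => sq_nonneg _) hβ0.le hβ1).const_mul _)
          (ae_of_all _ fun ω => norm_signedPowerTransform_sq_le d hβ0.le hβ1 (m t ω))
    _ = (d : ℝ) ^ (1 - β) * ∫ ω, (‖m t ω‖ ^ 2) ^ β ∂μ := integral_const_mul _ _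
    _ ≤ (d : ℝ) ^ (1 - β) * (∫ ω, ‖m t ω‖ ^ 2 ∂μ) ^ β := by
        gcongr
        exact integral_rpow_le_rpow_integral hm2 (fun ω => sq_nonneg _) hβ0.le hβ1
    _ ≤ (d : ℝ) ^ (1 - β) * (2 * (G ^ 2 + σ ^ 2) / (1 - γ) ^ 2) ^ β := by
        gcongr
        exact integral_norm_sq_momentum_le hγ0 hγ1 hm0 hmrec hgL2 hgB t
    _ = (d : ℝ) ^ (1 - β) * 2 ^ β * ((G ^ 2 + σ ^ 2) / (1 - γ) ^ 2) ^ β := by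
        rw [mul_div_assoc, Real.mul_rpow zero_le_two (by positivity), mul_assoc]

/-- **PowerStep transformed-update bound.**
Under the PowerStep stochastic setup — `f` differentiable with `‖∇f‖₂ ≤ G`;
iterates `m_0 = 0`, `m_t = γ·m_{t−1} + g_t`, `θ_t = θ_{t−1} − η_t·Φ_β(m_t)` with `θ_0`
deterministic, `γ ∈ [0,1)`, `β ∈ (0,1]`, `η_t > 0`; `g_t` being `F_t`-measurable,
`θ_{t-1}` being `F_{t-1}`-measurable, unbiased (`E[g_t|F_{t−1}] = ∇f(θ_{t−1})` a.s.) with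
conditional variance bounded by `σ²` — the transformed update satisfies
`E[‖Φ_β(m_t)‖₂²] ≤ d^{1−β}·2^β·((G² + σ²)/(1−γ)²)^β` for every `t ≥ 1`. -/
theorem powerstep_transformed_update_bound
    {Ω : Type*} {m0 : MeasurableSpace Ω} (μ : Measure Ω) [IsProbabilityMeasure μ]
    (ℱ : Filtration ℕ m0) (d : ℕ) (hd : 1 ≤ d)
    (f : EuclideanSpace ℝ (Fin d) → ℝ) (hf : Differentiable ℝ f)
    (G : ℝ) (hG : 0 < G) (hgrad : ∀ x, ‖gradient f x‖ ≤ G)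
    (γ : ℝ) (hγ0 : 0 ≤ γ) (hγ1 : γ < 1) (β : ℝ) (hβ0 : 0 < β) (hβ1 : β ≤ 1)
    (η : ℕ → ℝ) (hη : ∀ t, 0 < η t) (σ : ℝ) (hσ : 0 < σ)
    (θ m g : ℕ → Ω → EuclideanSpace ℝ (Fin d))
    (θ₀ : EuclideanSpace ℝ (Fin d)) (hθ0 : ∀ ω, θ 0 ω = θ₀)
    (hm0 : ∀ ω, m 0 ω = 0)
    (hmrec : ∀ t : ℕ, ∀ ω, m (t + 1) ω = γ • m t ω + g (t + 1) ω)
    (hθrec : ∀ t : ℕ, ∀ ω,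
      θ (t + 1) ω = θ t ω - η (t + 1) • signedPowerTransform d β (m (t + 1) ω))
    (hgmeas : ∀ t : ℕ, StronglyMeasurable[ℱ (t + 1)] (g (t + 1)))
    (hθmeas : ∀ t : ℕ, StronglyMeasurable[ℱ t] (θ t))
    (hgint : ∀ t : ℕ, Integrable (g (t + 1)) μ)
    (hg2int : ∀ t : ℕ, Integrable (fun ω => ‖g (t + 1) ω - gradient f (θ t ω)‖ ^ 2) μ)
    (hunbiased : ∀ t : ℕ, μ[g (t + 1) | ℱ t] =ᵐ[μ] fun ω => gradient f (θ t ω))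
    (hvar : ∀ t : ℕ, ∀ᵐ ω ∂μ,
      (μ[fun ω' => ‖g (t + 1) ω' - gradient f (θ t ω')‖ ^ 2 | ℱ t]) ω ≤ σ ^ 2) :
    ∀ t : ℕ, 1 ≤ t → ∫ ω, ‖signedPowerTransform d β (m t ω)‖ ^ 2 ∂μ
      ≤ (d : ℝ) ^ (1 - β) * 2 ^ β * ((G ^ 2 + σ ^ 2) / (1 - γ) ^ 2) ^ β :=
  powerstep_transformed_update_bound_general μ ℱ d f G hgrad γ hγ0 hγ1 β hβ0 hβ1 σ θ m g hm0 hmrec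
    hgmeas hg2int hvar
end

section
/- Let d ≥ 1, β ∈ (0, 1], and G > 0. For all vectors g, m ∈ ℝ^d with ‖g‖_{(1+β)/β} ≤ G, the alignment inequality ⟨g, Φ_β(m)⟩ ≥ ‖g‖_{1+β}^{1+β} − G · C_β · ‖m − g‖_{1+β}^β holds, where C_β = 2^{1−β}·d^{(1−β)/(1+β)}. -/
/-!
Write `Φ` for the signed power. Then `⟨g, Φ m⟩ = ‖g‖_{1+β}^{1+β} - ⟨g, Φ g - Φ m⟩`, and Hölder
with the conjugate exponents `(1+β)/β` and `1+β` bounds the error term by `G · ‖Φ m - Φ g‖_{1+β}`.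
The signed power is `β`-Hölder continuous with constant `2^(1-β)` (subadditivity of `t ↦ t^β` for
arguments of equal sign, concavity for arguments of opposite sign), and the concave power mean
inequality `∑ aᵢ^β ≤ d^(1-β) (∑ aᵢ)^β` turns `∑ |mᵢ - gᵢ|^(β(1+β))` into
`d^(1-β) ‖m - g‖_{1+β}^(β(1+β))`.
-/

open Finset

noncomputable def signedPow (β x : ℝ) : ℝ := Real.sign x * |x| ^ β

section signedPow

variable {β : ℝ}

lemma signedPow_of_nonneg (hβ : β ≠ 0) {x : ℝ} (hx : 0 ≤ x) : signedPow β x = x ^ β := by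
  rcases hx.lt_or_eq with hx | rfl
  · rw [signedPow, Real.sign_of_pos hx, abs_of_pos hx, one_mul]
  · rw [signedPow, Real.sign_zero, zero_mul, Real.zero_rpow hβ]

lemma signedPow_neg (x : ℝ) : signedPow β (-x) = -signedPow β x := by
  rw [signedPow, signedPow, Real.sign_neg, abs_neg, neg_mul]

lemma mul_signedPow_self (hβ : 1 + β ≠ 0) (x : ℝ) : x * signedPow β x = |x| ^ (1 + β) := by
  have hsign : x * Real.sign x = |x| := by
    rcases lt_trichotomy x 0 with hx | rfl | hx
    · rw [Real.sign_of_neg hx, abs_of_neg hx, mul_neg_one]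
    · simp
    · rw [Real.sign_of_pos hx, abs_of_pos hx, mul_one]
  rw [signedPow, ← mul_assoc, hsign, Real.rpow_add' (abs_nonneg x) hβ, Real.rpow_one]

end signedPow

section PowerMean

variable {β : ℝ}

lemma Real.sum_rpow_le_card_rpow_mul_rpow_sum {ι : Type*} (s : Finset ι) {f : ι → ℝ}
    (hf : ∀ i, 0 ≤ f i) (hβ0 : 0 < β) (hβ1 : β ≤ 1) :
    ∑ i ∈ s, f i ^ β ≤ (#s : ℝ) ^ (1 - β) * (∑ i ∈ s, f i) ^ β := by
  have hp : 1 ≤ β⁻¹ := one_le_inv_iff₀.mpr ⟨hβ0, hβ1⟩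
  have hpow : ∀ i, (f i ^ β) ^ β⁻¹ = f i := fun i => by
    rw [← Real.rpow_mul (hf i), mul_inv_cancel₀ hβ0.ne', Real.rpow_one]
  simpa [hpow] using
    Real.inner_le_weight_mul_Lp_of_nonneg s hp (fun _ => 1) (fun i => f i ^ β)
      (fun _ => zero_le_one) (fun i => Real.rpow_nonneg (hf i) β)

lemma Real.rpow_add_rpow_le_two_rpow_mul_rpow_add (hβ0 : 0 < β) (hβ1 : β ≤ 1) {a b : ℝ}
    (ha : 0 ≤ a) (hb : 0 ≤ b) : a ^ β + b ^ β ≤ 2 ^ (1 - β) * (a + b) ^ β := by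
  simpa [Fin.sum_univ_two] using
    Real.sum_rpow_le_card_rpow_mul_rpow_sum univ (f := ![a, b])
      (fun i => by fin_cases i <;> assumption) hβ0 hβ1

lemma Real.abs_rpow_sub_rpow_le (hβ0 : 0 ≤ β) (hβ1 : β ≤ 1) {a b : ℝ} (ha : 0 ≤ a) (hb : 0 ≤ b) :
    |a ^ β - b ^ β| ≤ |a - b| ^ β := by
  have hsub : ∀ x y : ℝ, 0 ≤ y → y ≤ x → x ^ β - y ^ β ≤ (x - y) ^ β := fun x y hy hyx => by
    have := Real.rpow_add_le_add_rpow (sub_nonneg.mpr hyx) hy hβ0 hβ1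
    rw [sub_add_cancel] at this
    linarith
  rcases le_total b a with h | h
  · rw [abs_of_nonneg (sub_nonneg.mpr (Real.rpow_le_rpow hb h hβ0)),
      abs_of_nonneg (sub_nonneg.mpr h)]
    exact hsub a b hb h
  · rw [abs_sub_comm, abs_sub_comm a, abs_of_nonneg (sub_nonneg.mpr (Real.rpow_le_rpow ha h hβ0)),
      abs_of_nonneg (sub_nonneg.mpr h)]
    exact hsub b a ha h

end PowerMean

section Holder

variable {β : ℝ}

lemma abs_signedPow_sub_le_of_nonneg (hβ0 : 0 < β) (hβ1 : β ≤ 1) {a : ℝ} (ha : 0 ≤ a) (b : ℝ) :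
    |signedPow β a - signedPow β b| ≤ 2 ^ (1 - β) * |a - b| ^ β := by
  rcases le_total 0 b with hb | hb
  · have hone : (1 : ℝ) ≤ 2 ^ (1 - β) := Real.one_le_rpow one_le_two (by linarith)
    rw [signedPow_of_nonneg hβ0.ne' ha, signedPow_of_nonneg hβ0.ne' hb]
    calc |a ^ β - b ^ β| ≤ |a - b| ^ β := Real.abs_rpow_sub_rpow_le hβ0.le hβ1 ha hb
      _ ≤ 2 ^ (1 - β) * |a - b| ^ β := le_mul_of_one_le_left (by positivity) hone
  · have hb' : 0 ≤ -b := neg_nonneg.mpr hb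
    have hΦb : signedPow β b = -(-b) ^ β := by
      rw [← signedPow_of_nonneg hβ0.ne' hb', signedPow_neg, neg_neg]
    have h := Real.rpow_add_rpow_le_two_rpow_mul_rpow_add hβ0 hβ1 ha hb'
    rw [← sub_eq_add_neg] at h
    rwa [signedPow_of_nonneg hβ0.ne' ha, hΦb, sub_neg_eq_add, abs_of_nonneg (by positivity),
      abs_of_nonneg (by linarith : 0 ≤ a - b)]

lemma abs_signedPow_sub_le (hβ0 : 0 < β) (hβ1 : β ≤ 1) (a b : ℝ) :
    |signedPow β a - signedPow β b| ≤ 2 ^ (1 - β) * |a - b| ^ β := by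
  rcases le_total 0 a with ha | ha
  · exact abs_signedPow_sub_le_of_nonneg hβ0 hβ1 ha b
  · have h := abs_signedPow_sub_le_of_nonneg hβ0 hβ1 (neg_nonneg.mpr ha) (-b)
    rwa [signedPow_neg, signedPow_neg, neg_sub_neg, neg_sub_neg, abs_sub_comm,
      abs_sub_comm b] at h

variable {ι : Type*} (s : Finset ι) {p : ℝ}

lemma sum_abs_signedPow_sub_rpow_le (hβ0 : 0 < β) (hβ1 : β ≤ 1) (hp : 0 < p) (x y : ι → ℝ) :
    ∑ i ∈ s, |signedPow β (x i) - signedPow β (y i)| ^ p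
      ≤ (2 ^ (1 - β)) ^ p * ((#s : ℝ) ^ (1 - β) * (∑ i ∈ s, |x i - y i| ^ p) ^ β) := by
  have hpointwise : ∀ i, |signedPow β (x i) - signedPow β (y i)| ^ p
      ≤ (2 ^ (1 - β)) ^ p * (|x i - y i| ^ p) ^ β := fun i => by
    calc |signedPow β (x i) - signedPow β (y i)| ^ p
        ≤ (2 ^ (1 - β) * |x i - y i| ^ β) ^ p :=
          Real.rpow_le_rpow (abs_nonneg _) (abs_signedPow_sub_le hβ0 hβ1 _ _) hp.le
      _ = (2 ^ (1 - β)) ^ p * (|x i - y i| ^ p) ^ β := by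
          rw [Real.mul_rpow (by positivity) (by positivity), ← Real.rpow_mul (abs_nonneg _),
            ← Real.rpow_mul (abs_nonneg _), mul_comm β]
  calc _ ≤ ∑ i ∈ s, (2 ^ (1 - β)) ^ p * (|x i - y i| ^ p) ^ β := sum_le_sum fun i _ => hpointwise i
    _ = (2 ^ (1 - β)) ^ p * ∑ i ∈ s, (|x i - y i| ^ p) ^ β := (mul_sum ..).symm
    _ ≤ _ := mul_le_mul_of_nonneg_left
          (Real.sum_rpow_le_card_rpow_mul_rpow_sum s (fun i => by positivity) hβ0 hβ1)
          (by positivity)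

lemma Lp_signedPow_sub_le (hβ0 : 0 < β) (hβ1 : β ≤ 1) (hp : 0 < p) (x y : ι → ℝ) :
    (∑ i ∈ s, |signedPow β (x i) - signedPow β (y i)| ^ p) ^ (1 / p)
      ≤ 2 ^ (1 - β) * (#s : ℝ) ^ ((1 - β) / p) * ((∑ i ∈ s, |x i - y i| ^ p) ^ (1 / p)) ^ β := by
  have hS : 0 ≤ ∑ i ∈ s, |x i - y i| ^ p := sum_nonneg fun i _ => by positivity
  refine (Real.rpow_le_rpow (sum_nonneg fun i _ => by positivity)
    (sum_abs_signedPow_sub_rpow_le s hβ0 hβ1 hp x y) (by positivity)).trans_eq ?_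
  rw [Real.mul_rpow (by positivity) (by positivity), Real.mul_rpow (by positivity) (by positivity),
    ← Real.rpow_mul (by positivity), mul_one_div_cancel hp.ne', Real.rpow_one,
    ← Real.rpow_mul (Nat.cast_nonneg _), ← Real.rpow_mul hS, ← Real.rpow_mul hS, mul_one_div,
    mul_one_div, one_div_mul_eq_div, mul_assoc]

end Holder

theorem powerstep_alignment_general (d : ℕ) (β : ℝ) (hβ0 : 0 < β) (hβ1 : β ≤ 1)
    (G : ℝ) (g m : Fin d → ℝ)
    (hg : (∑ i, |g i| ^ ((1 + β) / β)) ^ (β / (1 + β)) ≤ G) :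
    ∑ i, g i * (Real.sign (m i) * |m i| ^ β)
      ≥ ∑ i, |g i| ^ (1 + β)
        - G * ((2 : ℝ) ^ (1 - β) * (d : ℝ) ^ ((1 - β) / (1 + β))) *
          ((∑ i, |m i - g i| ^ (1 + β)) ^ ((1 : ℝ) / (1 + β))) ^ β := by
  have hp : 0 < 1 + β := by linarith
  have hconj : ((1 + β) / β).HolderConjugate (1 + β) := Real.holderConjugate_comm.mpr <|
    (Real.holderConjugate_iff_eq_conjExponent (by linarith)).mpr (by rw [add_sub_cancel_left])
  have hdecomp : ∑ i, g i * signedPow β (m i)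
      = ∑ i, |g i| ^ (1 + β) - ∑ i, -g i * (signedPow β (m i) - signedPow β (g i)) := by
    simp only [← mul_signedPow_self hp.ne', ← sum_sub_distrib]
    exact sum_congr rfl fun i _ => by ring
  have hholder := Real.inner_le_Lp_mul_Lq univ (fun i => -g i)
    (fun i => signedPow β (m i) - signedPow β (g i)) hconj
  have hLp := Lp_signedPow_sub_le univ hβ0 hβ1 hp m g
  simp only [abs_neg, one_div_div, card_univ, Fintype.card_fin] at hholder hLp
  have hG : 0 ≤ G := (Real.rpow_nonneg (sum_nonneg fun i _ => by positivity) _).trans hg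
  have herror := hholder.trans <|
    mul_le_mul hg hLp (Real.rpow_nonneg (sum_nonneg fun i _ => by positivity) _) hG
  show ∑ i, g i * signedPow β (m i) ≥ _
  linarith

/-- **Deterministic alignment inequality.**
Let `d ≥ 1`, `β ∈ (0,1]`, `G > 0`. For all `g, m : ℝ^d` with `‖g‖_{(1+β)/β} ≤ G`,
`⟨g, Φ_β(m)⟩ ≥ ‖g‖_{1+β}^{1+β} − G · C_β · ‖m − g‖_{1+β}^β`, where
`C_β = 2^(1−β)·d^((1−β)/(1+β))`, `Φ_β(m)_i = sign(m_i)·|m_i|^β` and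
`‖x‖_p = (Σ_i |x_i|^p)^(1/p)`. -/
theorem powerstep_alignment (d : ℕ) (hd : 1 ≤ d) (β : ℝ) (hβ0 : 0 < β) (hβ1 : β ≤ 1)
    (G : ℝ) (hG : 0 < G) (g m : Fin d → ℝ)
    (hg : (∑ i, |g i| ^ ((1 + β) / β)) ^ (β / (1 + β)) ≤ G) :
    ∑ i, g i * (Real.sign (m i) * |m i| ^ β)
      ≥ ∑ i, |g i| ^ (1 + β)
        - G * ((2 : ℝ) ^ (1 - β) * (d : ℝ) ^ ((1 - β) / (1 + β))) *
          ((∑ i, |m i - g i| ^ (1 + β)) ^ ((1 : ℝ) / (1 + β))) ^ β :=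
  powerstep_alignment_general d β hβ0 hβ1 G g m hg
end
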